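/- arXiv:2002.03724 — 5 statements merged into one kernel-verified Lean document; each statement's English description precedes it below -/
import Mathlib

section
/- For any weak (m,n,ρ)-AMD code with equiprobable sources and equiprobable encoding, ρ ≥ a(m-1)/(m(n-1)), where a = Σ_{s ∈ S} |G_s|. -/
/-!
Average the deception probability over all `n - 1` nonzero shifts `Δ`. For a fixed codeword
`g ∈ G_s`, the shifts `Δ ≠ 0` carrying `g` into some other `G_{s'}` are in bijection with the
`a - |G_s|` codewords outside `G_s` (and `Δ = 0` is never one of them, by disjointness). Hence the
shifts sum to `(1/m) ∑_s (a - |G_s|) = a (m - 1) / m`, and one of them must reach the average.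
-/

open Finset

section Translation

variable {G : Type*} [AddGroup G] [Fintype G] [DecidableEq G]

theorem card_filter_add_mem (g : G) (T : Finset G) : #{Δ | g + Δ ∈ T} = #T :=
  card_nbij' (g + ·) (-g + ·) (fun Δ hΔ => (mem_filter.1 hΔ).2)
    (fun x hx => by simpa using hx) (fun Δ _ => neg_add_cancel_left g Δ)
    (fun x _ => add_neg_cancel_left g x)

theorem sum_card_filter_add_mem_of_disjoint {A T : Finset G} (hAT : Disjoint A T) :
    ∑ Δ ∈ univ.erase 0, #{g ∈ A | g + Δ ∈ T} = #A * #T := by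
  rw [sum_erase univ (f := fun Δ => #{g ∈ A | g + Δ ∈ T}) (by simpa using disjoint_left.1 hAT)]
  calc ∑ Δ, #{g ∈ A | g + Δ ∈ T}
      = ∑ g ∈ A, #{Δ | g + Δ ∈ T} :=
        sum_card_bipartiteAbove_eq_sum_card_bipartiteBelow (fun Δ g => g + Δ ∈ T)
    _ = #A * #T := by simp only [card_filter_add_mem, sum_const, smul_eq_mul]

end Translation

section AMDCode

variable {S G : Type*} [Fintype S] [DecidableEq S] [DecidableEq G] {Gs : S → Finset G}

def otherEncodings (Gs : S → Finset G) (s : S) : Finset G := (univ.erase s).biUnion Gs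

theorem mem_otherEncodings {s : S} {g : G} :
    g ∈ otherEncodings Gs s ↔ ∃ s', s' ≠ s ∧ g ∈ Gs s' := by
  simp [otherEncodings]

theorem disjoint_otherEncodings (hdisj : ∀ s s', s ≠ s' → Disjoint (Gs s) (Gs s')) (s : S) :
    Disjoint (Gs s) (otherEncodings Gs s) := by
  rw [otherEncodings, disjoint_biUnion_right]
  exact fun s' hs' => hdisj s s' (ne_of_mem_erase hs').symm

theorem card_otherEncodings (hdisj : ∀ s s', s ≠ s' → Disjoint (Gs s) (Gs s')) (s : S) :
    (#(otherEncodings Gs s) : ℚ) = ∑ s', (#(Gs s') : ℚ) - #(Gs s) := by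
  rw [otherEncodings, card_biUnion fun x _ y _ hxy => hdisj x y hxy, Nat.cast_sum,
    sum_erase_eq_sub (mem_univ s)]

variable [AddCommGroup G]

/-- The probability that adding `Δ` to the encoding of a uniform source, encoded uniformly,
produces a valid encoding of a different source. -/
def deceptionProb (Gs : S → Finset G) (Δ : G) : ℚ :=
  (1 / (Fintype.card S : ℚ)) *
    ∑ s : S, (1 / ((Gs s).card : ℚ)) *
      ((Gs s).filter fun g => ∃ s', s' ≠ s ∧ g + Δ ∈ Gs s').card

theorem sum_deceptionProb [Fintype G] (hne : ∀ s, (Gs s).Nonempty)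
    (hdisj : ∀ s s', s ≠ s' → Disjoint (Gs s) (Gs s')) :
    ∑ Δ ∈ univ.erase 0, deceptionProb Gs Δ =
      (∑ s, (#(Gs s) : ℚ)) * ((Fintype.card S : ℚ) - 1) / Fintype.card S := by
  have hs (s : S) : ∑ Δ ∈ univ.erase (0 : G),
      (1 / (#(Gs s) : ℚ)) * #{g ∈ Gs s | ∃ s', s' ≠ s ∧ g + Δ ∈ Gs s'} =
        ∑ s', (#(Gs s') : ℚ) - #(Gs s) := by
    have hcard : (#(Gs s) : ℚ) ≠ 0 := by simpa using (hne s).ne_empty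
    simp_rw [← mem_otherEncodings, ← mul_sum, ← Nat.cast_sum,
      sum_card_filter_add_mem_of_disjoint (disjoint_otherEncodings hdisj s), Nat.cast_mul,
      card_otherEncodings hdisj]
    push_cast
    field_simp
  simp_rw [deceptionProb, ← mul_sum]
  rw [sum_comm, sum_congr rfl fun s _ => hs s, sum_sub_distrib, sum_const, card_univ,
    nsmul_eq_mul]
  ring

end AMDCode

theorem stmt_7_general {S G : Type} [Fintype S] [DecidableEq S]
    [AddCommGroup G] [Fintype G] [DecidableEq G] [Nontrivial G]
    (Gs : S → Finset G) (hne : ∀ s, (Gs s).Nonempty)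
    (hdisj : ∀ s s', s ≠ s' → Disjoint (Gs s) (Gs s')) (ρ : ℚ)
    (hsec : ∀ Δ : G, Δ ≠ 0 →
      (1 / (Fintype.card S : ℚ)) *
          ∑ s : S, (1 / ((Gs s).card : ℚ)) *
            ((Gs s).filter fun g => ∃ s', s' ≠ s ∧ g + Δ ∈ Gs s').card ≤ ρ) :
    (∑ s : S, ((Gs s).card : ℚ)) * ((Fintype.card S : ℚ) - 1) /
        ((Fintype.card S : ℚ) * ((Fintype.card G : ℚ) - 1)) ≤ ρ := by
  have hshifts : (#(univ.erase (0 : G)) : ℚ) = Fintype.card G - 1 := by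
    rw [card_erase_of_mem (mem_univ 0), card_univ, Nat.cast_pred Fintype.card_pos]
  have hn : (0 : ℚ) < Fintype.card G - 1 := by
    rw [sub_pos]; exact_mod_cast Fintype.one_lt_card
  have hsum : ∑ Δ ∈ univ.erase 0, deceptionProb Gs Δ ≤ (Fintype.card G - 1) * ρ := by
    rw [← hshifts, ← nsmul_eq_mul]
    exact sum_le_card_nsmul _ _ _ fun Δ hΔ => hsec Δ (ne_of_mem_erase hΔ)
  rw [sum_deceptionProb hne hdisj] at hsum
  rw [← div_div, div_le_iff₀ hn]
  linarith

/-- For any weak `(m,n,ρ)`-AMD code with equiprobable sources and equiprobable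
encoding (source set `S` of size `m`, group `G` of order `n`, pairwise disjoint
nonempty valid-encoding sets `G_s`), we have `ρ ≥ a(m-1)/(m(n-1))` where
`a = ∑_s |G_s|`. -/
theorem stmt_7 {S G : Type} [Fintype S] [DecidableEq S] [Nonempty S]
    [AddCommGroup G] [Fintype G] [DecidableEq G] [Nontrivial G]
    (Gs : S → Finset G) (hne : ∀ s, (Gs s).Nonempty)
    (hdisj : ∀ s s', s ≠ s' → Disjoint (Gs s) (Gs s')) (ρ : ℚ)
    (hsec : ∀ Δ : G, Δ ≠ 0 →
      (1 / (Fintype.card S : ℚ)) *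
          ∑ s : S, (1 / ((Gs s).card : ℚ)) *
            ((Gs s).filter fun g => ∃ s', s' ≠ s ∧ g + Δ ∈ Gs s').card ≤ ρ) :
    (∑ s : S, ((Gs s).card : ℚ)) * ((Fintype.card S : ℚ) - 1) /
        ((Fintype.card S : ℚ) * ((Fintype.card G : ℚ) - 1)) ≤ ρ :=
  stmt_7_general Gs hne hdisj ρ hsec
end

section
/- For any t-regular weak (m,n,ρ)-AMD code, ρ ≥ ⌈t² m (m-1)/(n-1)⌉ / (t m). -/
/-!
Sum the number of successful tamperings over all offsets `Δ`: every pair `(g, h)` with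
`g ∈ G_s`, `h ∈ G_{s'}`, `s ≠ s'` is counted exactly once, at `Δ = h - g`, so the total is
`t² m (m - 1)`. Disjointness makes the count at `Δ = 0` vanish, so some nonzero `Δ` has count at
least the average `t² m (m - 1) / (n - 1)`, hence at least its ceiling, and the success
probability of that `Δ` bounds `ρ` from below.
-/

open Finset
open scoped Pointwise

theorem Finset.sum_card_filter_add_mem {G : Type*} [AddGroup G] [Fintype G] [DecidableEq G]
    (A B : Finset G) : ∑ Δ, #{g ∈ A | g + Δ ∈ B} = #A * #B := by
  have card_translate (g : G) : #{Δ | g + Δ ∈ B} = #B := by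
    rw [← card_vadd_finset (-g) B]
    congr 1
    ext Δ
    simp [mem_neg_vadd_finset_iff]
  calc ∑ Δ, #{g ∈ A | g + Δ ∈ B}
      = ∑ g ∈ A, #{Δ | g + Δ ∈ B} :=
        (sum_card_bipartiteAbove_eq_sum_card_bipartiteBelow (fun g Δ => g + Δ ∈ B)).symm
    _ = #A * #B := by simp [card_translate]

section AMDCode

variable {S G : Type*} [Fintype S] [DecidableEq S] [DecidableEq G]

/-- The success probability of the offset `Δ` is this count divided by `t m`. -/
def tamperCount [Add G] (Gs : S → Finset G) (Δ : G) : ℕ :=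
  ∑ s, #{g ∈ Gs s | ∃ s', s' ≠ s ∧ g + Δ ∈ Gs s'}

theorem tamperCount_zero [AddZeroClass G] {Gs : S → Finset G}
    (hdisj : ∀ s s', s ≠ s' → Disjoint (Gs s) (Gs s')) : tamperCount Gs 0 = 0 := by
  refine sum_eq_zero fun s _ => card_eq_zero.mpr <| filter_eq_empty_iff.mpr ?_
  rintro g hg ⟨s', hs', hg'⟩
  rw [add_zero] at hg'
  exact disjoint_left.mp (hdisj s s' hs'.symm) hg hg'

theorem sum_tamperCount [AddGroup G] [Fintype G] {Gs : S → Finset G} {t : ℕ}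
    (hcard : ∀ s, #(Gs s) = t) (hdisj : ∀ s s', s ≠ s' → Disjoint (Gs s) (Gs s')) :
    ∑ Δ, (tamperCount Gs Δ : ℚ) =
      (t : ℚ) ^ 2 * Fintype.card S * ((Fintype.card S : ℚ) - 1) := by
  have per_source (s : S) :
      ∑ Δ, (#{g ∈ Gs s | ∃ s', s' ≠ s ∧ g + Δ ∈ Gs s'} : ℚ) =
        t * (Fintype.card S * t - t) := by
    have hothers : ∀ g Δ,
        (∃ s', s' ≠ s ∧ g + Δ ∈ Gs s') ↔ g + Δ ∈ (univ.erase s).biUnion Gs := by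
      simp
    simp_rw [filter_congr fun g _ => hothers g _]
    rw [← Nat.cast_sum, sum_card_filter_add_mem,
      card_biUnion fun a _ b _ hab => hdisj a b hab, hcard]
    push_cast
    rw [sum_erase_eq_sub (mem_univ s)]
    simp [hcard]
  unfold tamperCount
  push_cast
  rw [sum_comm]
  simp only [per_source, sum_const, card_univ, nsmul_eq_mul]
  ring

theorem exists_tamperCount_ge [AddGroup G] [Fintype G] [Nontrivial G] {Gs : S → Finset G}
    {t : ℕ} (hcard : ∀ s, #(Gs s) = t) (hdisj : ∀ s s', s ≠ s' → Disjoint (Gs s) (Gs s')) :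
    ∃ Δ : G, Δ ≠ 0 ∧ (t : ℚ) ^ 2 * Fintype.card S * ((Fintype.card S : ℚ) - 1) /
      ((Fintype.card G : ℚ) - 1) ≤ tamperCount Gs Δ := by
  have hnonzero : (univ.erase (0 : G)).Nonempty := by
    obtain ⟨Δ, hΔ⟩ := exists_ne (0 : G)
    exact ⟨Δ, mem_erase.mpr ⟨hΔ, mem_univ Δ⟩⟩
  have hn : (0 : ℚ) < Fintype.card G - 1 := by
    have : (1 : ℚ) < Fintype.card G := by exact_mod_cast Fintype.one_lt_card
    linarith
  have hsum : ∑ Δ ∈ univ.erase (0 : G), (tamperCount Gs Δ : ℚ) =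
      (t : ℚ) ^ 2 * Fintype.card S * ((Fintype.card S : ℚ) - 1) := by
    rw [sum_erase_eq_sub (mem_univ 0), sum_tamperCount hcard hdisj, tamperCount_zero hdisj,
      Nat.cast_zero, sub_zero]
  obtain ⟨Δ, hΔ, hle⟩ := exists_le_of_sum_le hnonzero (f := fun _ =>
    (t : ℚ) ^ 2 * Fintype.card S * ((Fintype.card S : ℚ) - 1) / ((Fintype.card G : ℚ) - 1))
    (g := fun Δ => (tamperCount Gs Δ : ℚ)) <| by
      rw [hsum, sum_const, card_erase_of_mem (mem_univ 0), card_univ, nsmul_eq_mul,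
        Nat.cast_pred Fintype.card_pos, mul_div_cancel₀ _ hn.ne']
  exact ⟨Δ, (mem_erase.mp hΔ).1, hle⟩

end AMDCode

theorem stmt_8_general {S G : Type} [Fintype S] [DecidableEq S]
    [AddCommGroup G] [Fintype G] [DecidableEq G] [Nontrivial G]
    (t : ℕ) (Gs : S → Finset G) (hcard : ∀ s, (Gs s).card = t)
    (hdisj : ∀ s s', s ≠ s' → Disjoint (Gs s) (Gs s')) (ρ : ℚ)
    (hsec : ∀ Δ : G, Δ ≠ 0 →
      (1 / ((t : ℚ) * Fintype.card S)) *
          ∑ s : S, (((Gs s).filter fun g => ∃ s', s' ≠ s ∧ g + Δ ∈ Gs s').card : ℚ) ≤ ρ) :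
    (⌈((t : ℚ) ^ 2 * Fintype.card S * ((Fintype.card S : ℚ) - 1)) /
          ((Fintype.card G : ℚ) - 1)⌉ : ℚ) / ((t : ℚ) * Fintype.card S) ≤ ρ := by
  obtain ⟨Δ, hΔ, hle⟩ := exists_tamperCount_ge hcard hdisj
  have hceil : (⌈(t : ℚ) ^ 2 * Fintype.card S * ((Fintype.card S : ℚ) - 1) /
      ((Fintype.card G : ℚ) - 1)⌉ : ℚ) ≤ tamperCount Gs Δ := by
    exact_mod_cast Int.ceil_le.mpr (by exact_mod_cast hle)
  calc _ ≤ (tamperCount Gs Δ : ℚ) / ((t : ℚ) * Fintype.card S) :=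
        div_le_div_of_nonneg_right hceil (by positivity)
    _ = _ := by rw [div_eq_inv_mul, one_div, tamperCount, Nat.cast_sum]
    _ ≤ ρ := hsec Δ hΔ

/-- For any `t`-regular weak `(m,n,ρ)`-AMD code,
`ρ ≥ ⌈t² m (m-1)/(n-1)⌉ / (t m)`. -/
theorem stmt_8 {S G : Type} [Fintype S] [DecidableEq S] [Nonempty S]
    [AddCommGroup G] [Fintype G] [DecidableEq G] [Nontrivial G]
    (t : ℕ) (ht : 0 < t) (Gs : S → Finset G) (hcard : ∀ s, (Gs s).card = t)
    (hdisj : ∀ s s', s ≠ s' → Disjoint (Gs s) (Gs s')) (ρ : ℚ)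
    (hsec : ∀ Δ : G, Δ ≠ 0 →
      (1 / ((t : ℚ) * Fintype.card S)) *
          ∑ s : S, (((Gs s).filter fun g => ∃ s', s' ≠ s ∧ g + Δ ∈ Gs s').card : ℚ) ≤ ρ) :
    (⌈((t : ℚ) ^ 2 * Fintype.card S * ((Fintype.card S : ℚ) - 1)) /
          ((Fintype.card G : ℚ) - 1)⌉ : ℚ) / ((t : ℚ) * Fintype.card S) ≤ ρ :=
  stmt_8_general t Gs hcard hdisj ρ hsec
end

section
/- For any strong (m,n,ρ)-AMD code and any source s, the maximal success probability of an adversary knowing s is at least 1/|G_s|: there exists a nonzero Δ ∈ G with Pr(dec(E(s)+Δ) ∉ {s,⊥}) ≥ 1/|G_s|, provided m ≥ 2 and the encoding of s is uniform on G_s. -/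
open Finset

/-! Pick another source `s'` and codewords `g ∈ G_s`, `g' ∈ G_{s'}`. The shift `Δ = g' - g`
is nonzero because `G_s` and `G_{s'}` are disjoint, and it succeeds on the encoding `g`,
an event of probability at least `1/|G_s|` under the uniform encoding. -/

theorem Finset.one_div_card_le_one_div_card_mul_card_filter {α : Type*} {A : Finset α}
    {p : α → Prop} [DecidablePred p] {a : α} (ha : a ∈ A) (hpa : p a) :
    (1 : ℚ) / (A.card : ℚ) ≤ (1 / (A.card : ℚ)) * ((A.filter p).card : ℚ) := by
  have hfilter : (1 : ℚ) ≤ ((A.filter p).card : ℚ) := by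
    exact_mod_cast card_pos.mpr ⟨a, mem_filter.mpr ⟨ha, hpa⟩⟩
  exact le_mul_of_one_le_right (by positivity) hfilter

/-- For a strong AMD code with at least two sources, disjoint nonempty
valid-encoding sets `G_s` and encoding of `s` uniform on `G_s`, for every source
`s` there is a nonzero offset `Δ` whose success probability against `s` is at
least `1/|G_s|`. -/
theorem stmt_9 {S G : Type} [Fintype S] [DecidableEq S]
    [AddCommGroup G] [Fintype G] [DecidableEq G]
    (hm : 2 ≤ Fintype.card S)
    (Gs : S → Finset G) (hne : ∀ s, (Gs s).Nonempty)
    (hdisj : ∀ s s', s ≠ s' → Disjoint (Gs s) (Gs s')) (s : S) :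
    ∃ Δ : G, Δ ≠ 0 ∧
      (1 : ℚ) / ((Gs s).card : ℚ) ≤
        (1 / ((Gs s).card : ℚ)) *
          (((Gs s).filter fun g => ∃ s', s' ≠ s ∧ g + Δ ∈ Gs s').card : ℚ) := by
  obtain ⟨s', hs'⟩ := Fintype.exists_ne_of_one_lt_card hm s
  obtain ⟨g, hg⟩ := hne s
  obtain ⟨g', hg'⟩ := hne s'
  have hshift_ne : g' - g ≠ 0 :=
    sub_ne_zero.mpr fun h => disjoint_left.mp (hdisj s s' hs'.symm) hg (h ▸ hg')
  refine ⟨g' - g, hshift_ne, one_div_card_le_one_div_card_mul_card_filter hg ⟨s', hs', ?_⟩⟩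
  rwa [add_sub_cancel]
end

section
/- Let q be a power of a prime p and t > 0 with p not dividing t+2. The function h : F_q^t × F_q → F_q given by h(S,x) = x^{t+2} + Σ_{i=1}^t s_i x^i has nonlinearity P_h ≤ (t+1)/q, i.e., for every (a, Δ) ∈ F_q^t × F_q with (a,Δ) ≠ (0,0) and every b ∈ F_q, |{(S,x) : h(S+a, x+Δ) - h(S,x) = b}| ≤ (t+1) q^t. -/
/-!
Write `h(S+a, x+Δ) - h(S, x) = ∑ sᵢ((x+Δ)ⁱ - xⁱ) + c(x)` with `c(x)` free of `S`, and
count the solutions fibre by fibre over `x`. If `Δ ≠ 0`, each fibre is an affine hyperplane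
in `S` (the coefficient of `s₁` is `Δ`), so there are `q^(t-1)` solutions per `x` and `q^t`
in all. If `Δ = 0`, then `a ≠ 0` and the difference is the nonzero polynomial `∑ aᵢxⁱ` of
degree `≤ t`, independent of `S`: at most `t` values of `x` occur, each with all `q^t`
choices of `S`.
-/

open Finset

lemma card_filter_prod_le_sum {α β : Type*} [Fintype α] [Fintype β] (P : α → β → Prop)
    [∀ x y, Decidable (P x y)] (B : β → ℕ) (hB : ∀ y, #{x | P x y} ≤ B y) :
    #{v : α × β | P v.1 v.2} ≤ ∑ y, B y := by
  rw [card_filter, Fintype.sum_prod_type_right]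
  exact sum_le_sum fun y _ => (card_filter (P · y) univ).symm.le.trans (hB y)

lemma card_filter_sum_mul_eq_le {ι K : Type*} [Fintype ι] [DecidableEq ι] [Field K] [Fintype K]
    [DecidableEq K] (c : ι → K) {j : ι} (hc : c j ≠ 0) (d : K) :
    #{S : ι → K | ∑ i, S i * c i = d} ≤ Fintype.card K ^ (Fintype.card ι - 1) := by
  have hinj : Set.InjOn (fun (S : ι → K) (i : {i // i ≠ j}) => S i)
      {S | ∑ i, S i * c i = d} := by
    intro S hS S' hS' hSS'
    have hoff : ∀ i ≠ j, S i = S' i := fun i hi => congrFun hSS' ⟨i, hi⟩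
    have hdiff : ∑ i, (S i - S' i) * c i = (S j - S' j) * c j :=
      sum_eq_single j (fun i _ hi => by rw [hoff i hi, sub_self, zero_mul]) (by simp)
    have hj : S j = S' j := by
      simp only [Set.mem_ofPred_eq] at hS hS'
      simpa [sub_mul, sum_sub_distrib, hS, hS', hc, sub_eq_zero, eq_comm] using hdiff
    funext i
    by_cases hi : i = j
    · rw [hi, hj]
    · exact hoff i hi
  calc _ ≤ #(univ : Finset ({i // i ≠ j} → K)) :=
        card_le_card_of_injOn _ (fun _ _ => mem_coe.2 (mem_univ _)) (by simpa using hinj)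
    _ = _ := by simp [Fintype.card_subtype_compl]

open Polynomial in
lemma card_filter_sum_mul_pow_eq_le {K : Type} [Field K] [Fintype K] [DecidableEq K]
    {t : ℕ} {a : Fin t → K} (ha : a ≠ 0) (b : K) :
    #{x : K | ∑ i : Fin t, a i * x ^ ((i : ℕ) + 1) = b} ≤ t := by
  set P : K[X] := ∑ i : Fin t, C (a i) * X ^ ((i : ℕ) + 1) - C b
  obtain ⟨j, hj⟩ := Function.ne_iff.mp ha
  have hcoeff : P.coeff ((j : ℕ) + 1) = a j := by
    simp [P, Fin.val_eq_val]
  have hP : P ≠ 0 := fun h => hj (by rw [← hcoeff, h, coeff_zero, Pi.zero_apply])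
  have hdeg : P.natDegree ≤ t := by
    refine (natDegree_sub_le _ _).trans (max_le ?_ (by simp))
    refine natDegree_sum_le_of_forall_le _ _ fun i _ => ?_
    exact (natDegree_C_mul_X_pow_le _ _).trans i.isLt
  refine (card_le_degree_of_subset_roots fun x hx => ?_).trans hdeg
  simp_all [P, mem_roots hP, eval_finsetSum]

section PolyHash

variable {K : Type} [Field K] {t : ℕ}

/-- The paper's `h(S, x)`; the coordinate `S i` is the coefficient `s_(i+1)` of `x^(i+1)`. -/
def polyHash (S : Fin t → K) (x : K) : K :=
  x ^ (t + 2) + ∑ i : Fin t, S i * x ^ ((i : ℕ) + 1)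

lemma polyHash_add_sub_polyHash (S a : Fin t → K) (x y : K) :
    polyHash (S + a) y - polyHash S x =
      ∑ i : Fin t, S i * (y ^ ((i : ℕ) + 1) - x ^ ((i : ℕ) + 1)) +
        (polyHash a y - x ^ (t + 2)) := by
  simp only [polyHash, Pi.add_apply, add_mul, mul_sub, sum_add_distrib, sum_sub_distrib]
  ring

lemma polyHash_add_sub_polyHash_self (S a : Fin t → K) (x : K) :
    polyHash (S + a) x - polyHash S x = ∑ i : Fin t, a i * x ^ ((i : ℕ) + 1) := by
  simp only [polyHash, Pi.add_apply, add_mul, sum_add_distrib]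
  ring

variable [Fintype K] [DecidableEq K]

lemma card_polyHash_add_sub_eq_le_of_ne_zero (ht : 0 < t) (a : Fin t → K) {Δ : K}
    (hΔ : Δ ≠ 0) (b : K) :
    #{v : (Fin t → K) × K | polyHash (v.1 + a) (v.2 + Δ) - polyHash v.1 v.2 = b} ≤
      Fintype.card K ^ t := by
  calc _ ≤ ∑ _x : K, Fintype.card K ^ (t - 1) :=
        card_filter_prod_le_sum (fun S x => polyHash (S + a) (x + Δ) - polyHash S x = b) _
          fun x => by
          let c : Fin t → K := fun i => (x + Δ) ^ ((i : ℕ) + 1) - x ^ ((i : ℕ) + 1)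
          have hc : c ⟨0, ht⟩ ≠ 0 := by simpa [c] using hΔ
          simpa [polyHash_add_sub_polyHash, ← eq_sub_iff_add_eq] using
            card_filter_sum_mul_eq_le c hc (b - (polyHash a (x + Δ) - x ^ (t + 2)))
    _ = Fintype.card K ^ t := by
      rw [sum_const, card_univ, smul_eq_mul, ← pow_succ', Nat.sub_add_cancel ht]

lemma card_polyHash_add_sub_self_eq_le {a : Fin t → K} (ha : a ≠ 0) (b : K) :
    #{v : (Fin t → K) × K | polyHash (v.1 + a) v.2 - polyHash v.1 v.2 = b} ≤
      t * Fintype.card K ^ t := by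
  calc _ ≤ ∑ x : K,
          if ∑ i : Fin t, a i * x ^ ((i : ℕ) + 1) = b then Fintype.card K ^ t else 0 :=
        card_filter_prod_le_sum (fun S x => polyHash (S + a) x - polyHash S x = b) _
          fun x => by
          simp only [polyHash_add_sub_polyHash_self]
          split_ifs with hx <;> simp [hx]
    _ = #{x : K | ∑ i : Fin t, a i * x ^ ((i : ℕ) + 1) = b} * Fintype.card K ^ t := by
      rw [← sum_filter, sum_const, smul_eq_mul]
    _ ≤ t * Fintype.card K ^ t := by
      gcongr
      exact card_filter_sum_mul_pow_eq_le ha b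

end PolyHash

theorem stmt_16_general {K : Type} [Field K] [Fintype K] [DecidableEq K]
    (t : ℕ) (ht : 0 < t) :
    ∀ a : Fin t → K, ∀ Δ : K, (a, Δ) ≠ (0, 0) → ∀ b : K,
      (Finset.univ.filter fun v : (Fin t → K) × K =>
          ((v.2 + Δ) ^ (t + 2) + ∑ i : Fin t, (v.1 i + a i) * (v.2 + Δ) ^ ((i : ℕ) + 1)) -
            (v.2 ^ (t + 2) + ∑ i : Fin t, v.1 i * v.2 ^ ((i : ℕ) + 1)) = b).card ≤
        (t + 1) * Fintype.card K ^ t := by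
  intro a Δ hne b
  change #{v : (Fin t → K) × K | polyHash (v.1 + a) (v.2 + Δ) - polyHash v.1 v.2 = b} ≤ _
  rcases eq_or_ne Δ 0 with rfl | hΔ
  · have ha : a ≠ 0 := fun h => hne (by rw [h])
    simpa only [add_zero] using (card_polyHash_add_sub_self_eq_le ha b).trans (by gcongr; omega)
  · exact (card_polyHash_add_sub_eq_le_of_ne_zero ht a hΔ b).trans
      (Nat.le_mul_of_pos_left _ t.succ_pos)

/-- Let `q = p^k`, `t > 0`, `p ∤ t+2`, and `h(S,x) = x^(t+2) + ∑_{i=1}^t S_i x^i`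
on `F_q^t × F_q`. Then `P_h ≤ (t+1)/q`: for every `(a,Δ) ≠ (0,0)` and every `b`,
the number of `(S,x)` with `h(S+a, x+Δ) - h(S,x) = b` is at most `(t+1) q^t`. -/
theorem stmt_16 {K : Type} [Field K] [Fintype K] [DecidableEq K]
    (p : ℕ) [Fact p.Prime] [CharP K p] (t : ℕ) (ht : 0 < t) (hp : ¬ p ∣ (t + 2)) :
    ∀ a : Fin t → K, ∀ Δ : K, (a, Δ) ≠ (0, 0) → ∀ b : K,
      (Finset.univ.filter fun v : (Fin t → K) × K =>
          ((v.2 + Δ) ^ (t + 2) + ∑ i : Fin t, (v.1 i + a i) * (v.2 + Δ) ^ ((i : ℕ) + 1)) -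
            (v.2 ^ (t + 2) + ∑ i : Fin t, v.1 i * v.2 ^ ((i : ℕ) + 1)) = b).card ≤
        (t + 1) * Fintype.card K ^ t :=
  stmt_16_general t ht
end

section
/- Let E be the encoding of a systematic regular weak (m,n,ρ)-AMD code on A_1 × A_2 × B given by E(s) = (s, x, f_E(s,x)) with s uniform on A_1 and x uniform on A_2. Then the nonlinearity of f_E : A_1 × A_2 → B satisfies P_{f_E} ≤ max({ρ} ∪ {P_{f_{E,s'}} : s' ∈ A_1}), where f_{E,s'}(x) = f_E(s', x) : A_2 → B. -/
open Finset

/-- Derivative count `|{(s,x) : f(s+Δ₁, x+Δ₂) - f(s,x) = Δ₃}|`. -/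
def dCount {A1 A2 B : Type} [AddCommGroup A1] [Fintype A1] [AddCommGroup A2] [Fintype A2]
    [AddCommGroup B] [DecidableEq B] (f : A1 × A2 → B) (d1 : A1) (d2 : A2) (d3 : B) : ℕ :=
  (Finset.univ.filter fun p : A1 × A2 => f (p.1 + d1, p.2 + d2) - f p = d3).card

/-- Numerator of the nonlinearity of the restricted function `f_{E,s'} : A₂ → B`,
`x ↦ f(s', x)`: max over `Δ₂ ≠ 0` and `Δ₃` of `|{x : f(s',x+Δ₂) - f(s',x) = Δ₃}|`. -/
def sSup {A1 A2 B : Type} [AddCommGroup A2] [Fintype A2] [DecidableEq A2]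
    [AddCommGroup B] [Fintype B] [DecidableEq B] (f : A1 × A2 → B) (s : A1) : ℕ :=
  Finset.sup ((Finset.univ.filter fun d2 : A2 => d2 ≠ 0) ×ˢ (Finset.univ : Finset B))
    fun q => (Finset.univ.filter fun x : A2 => f (s, x + q.1) - f (s, x) = q.2).card

theorem card_filter_slice_le_sSup {A1 A2 B : Type} [AddCommGroup A2] [Fintype A2] [DecidableEq A2]
    [AddCommGroup B] [Fintype B] [DecidableEq B] (f : A1 × A2 → B)
    {d2 : A2} (hd2 : d2 ≠ 0) (d3 : B) (s : A1) :
    #{x : A2 | f (s, x + d2) - f (s, x) = d3} ≤ sSup f s :=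
  le_sup (f := fun q : A2 × B => #{x : A2 | f (s, x + q.1) - f (s, x) = q.2}) (b := (d2, d3))
    (mem_product.mpr ⟨mem_filter.mpr ⟨mem_univ _, hd2⟩, mem_univ d3⟩)

section

variable {A1 A2 B : Type} [AddCommGroup A1] [Fintype A1] [AddCommGroup A2] [Fintype A2]
  [AddCommGroup B] [DecidableEq B]

theorem dCount_zero_left (f : A1 × A2 → B) (d2 : A2) (d3 : B) :
    dCount f 0 d2 d3 =
      ∑ s : A1, #{x : A2 | f (s, x + d2) - f (s, x) = d3} := by
  simp only [dCount, add_zero, card_filter, Fintype.sum_prod_type]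

/-- A shift `(0, Δ₂)` only moves inside the slices `{s} × A₂`, so its derivative count
is a sum of slice counts, each bounded by the slice nonlinearity. -/
theorem dCount_zero_left_div_le_sup' [DecidableEq A2] [Fintype B]
    (f : A1 × A2 → B) {d2 : A2} (hd2 : d2 ≠ 0) (d3 : B) :
    (dCount f 0 d2 d3 : ℚ) / ((Fintype.card A1 : ℚ) * Fintype.card A2) ≤
      univ.sup' univ_nonempty fun s : A1 => (sSup f s : ℚ) / (Fintype.card A2 : ℚ) := by
  set S := univ.sup' univ_nonempty fun s : A1 => (sSup f s : ℚ) / (Fintype.card A2 : ℚ)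
  have hA2 : (0 : ℚ) < Fintype.card A2 := by exact_mod_cast Fintype.card_pos
  have hslice : ∀ s ∈ (univ : Finset A1),
      (#{x : A2 | f (s, x + d2) - f (s, x) = d3} : ℚ) ≤ S * Fintype.card A2 := fun s _ =>
    calc (#{x : A2 | f (s, x + d2) - f (s, x) = d3} : ℚ)
        ≤ sSup f s := by exact_mod_cast card_filter_slice_le_sSup f hd2 d3 s
      _ ≤ S * Fintype.card A2 :=
        (div_le_iff₀ hA2).mp (le_sup' (fun s : A1 => (sSup f s : ℚ) / Fintype.card A2)
          (mem_univ s))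
  rw [div_le_iff₀ (by positivity), dCount_zero_left]
  push_cast
  calc _ ≤ #(univ : Finset A1) • (S * Fintype.card A2) := sum_le_card_nsmul _ _ _ hslice
    _ = S * (Fintype.card A1 * Fintype.card A2) := by rw [card_univ, nsmul_eq_mul]; ring

end

theorem stmt_17_general {A1 A2 B : Type} [AddCommGroup A1] [Fintype A1]
    [AddCommGroup A2] [Fintype A2] [DecidableEq A2]
    [AddCommGroup B] [Fintype B] [DecidableEq B] (f : A1 × A2 → B) (ρ : ℚ)
    (hAMD : ∀ d1 : A1, d1 ≠ 0 → ∀ d2 : A2, ∀ d3 : B,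
      (dCount f d1 d2 d3 : ℚ) / ((Fintype.card A1 : ℚ) * Fintype.card A2) ≤ ρ) :
    ∀ d1 : A1, ∀ d2 : A2, (d1, d2) ≠ (0, 0) → ∀ d3 : B,
      (dCount f d1 d2 d3 : ℚ) / ((Fintype.card A1 : ℚ) * Fintype.card A2) ≤
        max ρ (Finset.univ.sup' Finset.univ_nonempty fun s : A1 =>
          (sSup f s : ℚ) / (Fintype.card A2 : ℚ)) := by
  intro d1 d2 hne d3
  rcases eq_or_ne d1 0 with rfl | hd1
  · have hd2 : d2 ≠ 0 := by rintro rfl; exact hne rfl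
    exact (dCount_zero_left_div_le_sup' f hd2 d3).trans (le_max_right _ _)
  · exact (hAMD d1 hd1 d2 d3).trans (le_max_left _ _)

/-- For a systematic regular weak AMD code with encoding `E(s) = (s, x, f_E(s,x))`,
the nonlinearity of `f_E` satisfies
`P_{f_E} ≤ max {ρ} ∪ {P_{f_{E,s'}} : s' ∈ A₁}`. -/
theorem stmt_17 {A1 A2 B : Type} [AddCommGroup A1] [Fintype A1] [DecidableEq A1]
    [Nontrivial A1] [AddCommGroup A2] [Fintype A2] [DecidableEq A2] [Nontrivial A2]
    [AddCommGroup B] [Fintype B] [DecidableEq B] (f : A1 × A2 → B) (ρ : ℚ)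
    (hAMD : ∀ d1 : A1, d1 ≠ 0 → ∀ d2 : A2, ∀ d3 : B,
      (dCount f d1 d2 d3 : ℚ) / ((Fintype.card A1 : ℚ) * Fintype.card A2) ≤ ρ) :
    ∀ d1 : A1, ∀ d2 : A2, (d1, d2) ≠ (0, 0) → ∀ d3 : B,
      (dCount f d1 d2 d3 : ℚ) / ((Fintype.card A1 : ℚ) * Fintype.card A2) ≤
        max ρ (Finset.univ.sup' Finset.univ_nonempty fun s : A1 =>
          (sSup f s : ℚ) / (Fintype.card A2 : ℚ)) :=
  stmt_17_general f ρ hAMD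
end
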